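/- arXiv:1610.08156 — 2 statements merged into one kernel-verified Lean document; each statement's English description precedes it below -/
import Mathlib

section
/- Let R be a commutative Noetherian ring with 1 and let A be a finite (not necessarily unital, associative, or commutative) R-algebra. Elements a_1, ..., a_n of A generate A as a non-unital R-algebra if and only if for every maximal ideal p of R, the images a_1(p), ..., a_n(p) in A(p) := A ⊗_R R(p) generate A(p) as a non-unital R(p)-algebra. -/
/-!
Let `C` be the non-unital subalgebra generated by the `aᵢ`. Since `x ↦ 1 ⊗ x` is
multiplicative, the subalgebra of `k ⊗ A` generated by the `1 ⊗ aᵢ` is the `k`-span of `1 ⊗ C`,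
i.e. the base change of `C`. So the local hypothesis says that `C` becomes everything after
tensoring with each `k(p)`; by right exactness `k(p) ⊗ (A ⧸ C) = 0`, and as `A ⧸ C` is finitely
generated, Nakayama's lemma at every maximal ideal forces `A ⧸ C = 0`.
-/

open TensorProduct

/-- `s` generates `A` as a non-unital (non-associative) `R`-algebra: every `R`-submodule of `A`
containing `s` and closed under multiplication is all of `A` (equivalently, the smallest such
submodule is `⊤`). -/
def GeneratesAsNonUnitalAlgebra (R : Type*) {A : Type*} [CommSemiring R]
    [NonUnitalNonAssocSemiring A] [Module R A] (s : Set A) : Prop :=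
  ∀ B : Submodule R A, s ⊆ (B : Set A) → (∀ x ∈ B, ∀ y ∈ B, x * y ∈ B) → B = ⊤

section NonUnitalAlgebra

open NonUnitalAlgebra

variable {R A : Type*} [CommSemiring R] [NonUnitalNonAssocSemiring A] [Module R A]
  [IsScalarTower R A A] [SMulCommClass R A A]

theorem generatesAsNonUnitalAlgebra_iff_adjoin_eq_top {s : Set A} :
    GeneratesAsNonUnitalAlgebra R s ↔ adjoin R s = ⊤ := by
  refine ⟨fun h => ?_, fun h B hsB hmul => ?_⟩
  · rw [← toSubmodule_eq_top]
    exact h _ (subset_adjoin R) fun _ hx _ hy => (adjoin R s).mul_mem hx hy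
  · rw [← top_le_iff, ← toSubmodule_eq_top.mpr h]
    exact adjoin_le (S := B.toNonUnitalSubalgebra fun x y hx hy => hmul x hx y hy) hsB

variable (R A) (S : Type*) [CommSemiring S] [Algebra R S]

def TensorProduct.includeRightMulHom : A →ₙ* S ⊗[R] A where
  toFun := mk R S A 1
  map_mul' x y := by simp [Algebra.TensorProduct.tmul_mul_tmul]

variable {R A}

theorem NonUnitalAlgebra.adjoin_image_one_tmul_toSubmodule (s : Set A) :
    (adjoin S (mk R S A 1 '' s)).toSubmodule = (adjoin R s).toSubmodule.baseChange S := by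
  rw [adjoin_eq_span, adjoin_eq_span, Submodule.baseChange_span]
  congr 1
  exact congrArg SetLike.coe (MulHom.map_mclosure (includeRightMulHom R A S) s).symm

end NonUnitalAlgebra

section LocalGlobal

variable {R M : Type*} [CommRing R] [AddCommGroup M] [Module R M]

theorem Submodule.subsingleton_tensor_quotient_of_baseChange_eq_top (S : Type*) [CommRing S]
    [Algebra R S] {N : Submodule R M} (h : N.baseChange S = ⊤) :
    Subsingleton (S ⊗[R] (M ⧸ N)) := by
  refine subsingleton_of_forall_eq 0 fun z => ?_
  obtain ⟨w, rfl⟩ := LinearMap.baseChange_surjective S N.mkQ_surjective z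
  obtain ⟨u, rfl⟩ : w ∈ N.baseChange S := h ▸ Submodule.mem_top
  rw [← LinearMap.comp_apply, ← LinearMap.baseChange_comp,
    (LinearMap.exact_subtype_mkQ N).linearMap_comp_eq_zero, LinearMap.baseChange_zero,
    LinearMap.zero_apply]

variable (M) in
noncomputable def Ideal.fractionRingQuotientTensorEquiv (p : Ideal R) [p.IsMaximal] :
    FractionRing (R ⧸ p) ⊗[R] M ≃ₗ[R] (R ⧸ p) ⊗[R] M :=
  letI := Ideal.Quotient.field p
  TensorProduct.congr ((FractionRing.algEquiv (R ⧸ p) (R ⧸ p)).toLinearEquiv.restrictScalars R)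
    (LinearEquiv.refl R M)

theorem Module.subsingleton_of_forall_isMaximal_subsingleton_quotient_tensor
    [Module.Finite R M]
    (h : ∀ p : Ideal R, p.IsMaximal → Subsingleton ((R ⧸ p) ⊗[R] M)) : Subsingleton M := by
  by_contra hM
  obtain ⟨p, hp, hann⟩ :=
    Ideal.exists_le_maximal _ (mt (Module.annihilator_eq_top_iff (R := R)).mp hM)
  have hpM : p • (⊤ : Submodule R M) = ⊤ := by
    have := h p hp
    exact Submodule.Quotient.subsingleton_iff.mp (quotTensorEquivQuotSMul M p).symm.subsingleton
  obtain ⟨r, hr1, hr0⟩ := Submodule.exists_sub_one_mem_and_smul_eq_zero_of_fg_of_le_smul p ⊤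
    Module.Finite.fg_top hpM.ge
  have hr : r ∈ p := hann (Module.mem_annihilator.mpr fun m => hr0 m trivial)
  exact hp.ne_top ((Ideal.eq_top_iff_one p).mpr (by simpa using p.sub_mem hr hr1))

theorem Submodule.eq_top_of_forall_isMaximal_baseChange_eq_top [Module.Finite R M]
    {N : Submodule R M}
    (h : ∀ p : Ideal R, p.IsMaximal → N.baseChange (FractionRing (R ⧸ p)) = ⊤) : N = ⊤ := by
  rw [← Submodule.Quotient.subsingleton_iff]
  refine Module.subsingleton_of_forall_isMaximal_subsingleton_quotient_tensor (R := R)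
    fun p hp => ?_
  have := N.subsingleton_tensor_quotient_of_baseChange_eq_top _ (h p hp)
  exact (p.fractionRingQuotientTensorEquiv (M ⧸ N)).symm.subsingleton

end LocalGlobal

theorem generate_iff_locally_generate_general (R : Type) [CommRing R]
    (A : Type) [NonUnitalNonAssocRing A] [Module R A]
    [SMulCommClass R A A] [IsScalarTower R A A] [Module.Finite R A]
    (n : ℕ) (a : Fin n → A) :
    GeneratesAsNonUnitalAlgebra R (Set.range a) ↔
      ∀ (p : Ideal R), p.IsMaximal →
        GeneratesAsNonUnitalAlgebra (FractionRing (R ⧸ p))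
          (Set.range fun i => ((1 : FractionRing (R ⧸ p)) ⊗ₜ[R] a i)) := by
  have hrange (S : Type) [CommRing S] [Algebra R S] :
      Set.range (fun i => (1 : S) ⊗ₜ[R] a i) = mk R S A 1 '' Set.range a :=
    Set.range_comp (mk R S A 1) a
  simp only [generatesAsNonUnitalAlgebra_iff_adjoin_eq_top, hrange,
    ← NonUnitalAlgebra.toSubmodule_eq_top, NonUnitalAlgebra.adjoin_image_one_tmul_toSubmodule]
  refine ⟨fun h p _ => ?_, Submodule.eq_top_of_forall_isMaximal_baseChange_eq_top⟩
  rw [h, Submodule.baseChange_top]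

/-- Lemma 2.1: elements a₁, ..., aₙ generate the finite R-algebra A iff their images generate
A(p) over R(p) for every maximal ideal p. -/
theorem generate_iff_locally_generate (R : Type) [CommRing R] [IsNoetherianRing R]
    (A : Type) [NonUnitalNonAssocRing A] [Module R A]
    [SMulCommClass R A A] [IsScalarTower R A A] [Module.Finite R A]
    (n : ℕ) (a : Fin n → A) :
    GeneratesAsNonUnitalAlgebra R (Set.range a) ↔
      ∀ (p : Ideal R), p.IsMaximal →
        GeneratesAsNonUnitalAlgebra (FractionRing (R ⧸ p))
          (Set.range fun i => ((1 : FractionRing (R ⧸ p)) ⊗ₜ[R] a i)) :=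
  generate_iff_locally_generate_general R A n a
end

section
/- Let F be an infinite field and let A be an étale F-algebra of rank n, i.e., a product of finite separable field extensions of F of total dimension n. Then A can be generated by one element as a non-unital F-algebra. -/
/-!
An étale algebra over a field is a finite product of finite separable field extensions `Kᵢ`.
Choose primitive elements `αᵢ` and shift each by a scalar so that the minimal polynomials become
pairwise distinct, hence coprime: by the Chinese remainder theorem `x = (αᵢ)` then generates the
product as a unital algebra. Shifting `x` once more by a scalar outside its (finite) spectrum makes
it a unit `u`, and then every `y = (y u⁻¹) u` lies in the non-unital algebra generated by `u`,
because multiplying a polynomial in `u` by `u` kills its constant term.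
-/

open Polynomial

theorem GeneratesAsNonUnitalAlgebra.of_adjoin_eq_top {R A : Type*} [CommSemiring R]
    [NonUnitalSemiring A] [Module R A] [IsScalarTower R A A] [SMulCommClass R A A] {s : Set A}
    (h : NonUnitalAlgebra.adjoin R s = ⊤) : GeneratesAsNonUnitalAlgebra R s := by
  intro B hs hmul
  let S : NonUnitalSubalgebra R A := { B with mul_mem' := fun ha hb => hmul _ ha _ hb }
  have hle : NonUnitalAlgebra.adjoin R s ≤ S := NonUnitalAlgebra.adjoin_le (S := S) hs
  rw [h] at hle
  exact Submodule.eq_top_iff'.mpr fun x => hle (NonUnitalAlgebra.mem_top (x := x))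

theorem NonUnitalAlgebra.adjoin_singleton_eq_top_of_isUnit {R A : Type*} [CommSemiring R]
    [CommRing A] [Algebra R A] {u : A} (hu : IsUnit u) (h : Algebra.adjoin R {u} = ⊤) :
    NonUnitalAlgebra.adjoin R {u} = ⊤ := by
  set N := NonUnitalAlgebra.adjoin R {u}
  have hu_mem : u ∈ N := NonUnitalAlgebra.self_mem_adjoin_singleton R u
  have mul_mem : ∀ x : A, x * u ∈ N := by
    intro x
    have hx : x ∈ Subalgebra.toSubmodule (Algebra.adjoin R (N : Set A)) := by
      simp [N, Algebra.adjoin_nonUnitalSubalgebra, h]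
    rw [Algebra.adjoin_nonUnitalSubalgebra_eq_span, Submodule.mem_sup] at hx
    obtain ⟨y, hy, z, hz, rfl⟩ := hx
    obtain ⟨r, rfl⟩ := Submodule.mem_span_singleton.mp hy
    rw [add_mul, smul_mul_assoc, one_mul]
    exact add_mem (N.smul_mem r hu_mem) (N.mul_mem hz hu_mem)
  refine NonUnitalAlgebra.eq_top_iff.mpr fun y => ?_
  simpa [mul_assoc] using mul_mem (y * ↑hu.unit⁻¹)

theorem Algebra.adjoin_singleton_algebraMap_sub {R A : Type*} [CommRing R] [Ring A] [Algebra R A]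
    (r : R) (x : A) : Algebra.adjoin R {algebraMap R A r - x} = Algebra.adjoin R {x} := by
  refine le_antisymm (Algebra.adjoin_singleton_le ?_) (Algebra.adjoin_singleton_le ?_)
  · exact sub_mem (Subalgebra.algebraMap_mem _ r) (Algebra.self_mem_adjoin_singleton R x)
  · simpa using sub_mem (Subalgebra.algebraMap_mem _ r)
      (Algebra.self_mem_adjoin_singleton R (algebraMap R A r - x))

theorem spectrum.finite_of_finiteDimensional {F A : Type*} [Field F] [Ring A] [Algebra F A]
    [FiniteDimensional F A] (a : A) : (spectrum F a).Finite := by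
  refine (Module.End.finite_spectrum (Algebra.lmul F A a)).subset fun t ht => ?_
  rwa [spectrum.mem_iff, ← Algebra.lmul_isUnit_iff (R := F), map_sub, AlgHom.commutes] at ht

theorem exists_isUnit_adjoin_singleton_eq_top {F A : Type*} [Field F] [Infinite F] [Ring A]
    [Algebra F A] [FiniteDimensional F A] {a : A} (ha : Algebra.adjoin F {a} = ⊤) :
    ∃ u : A, IsUnit u ∧ Algebra.adjoin F {u} = ⊤ := by
  obtain ⟨t, ht⟩ := (spectrum.finite_of_finiteDimensional (F := F) a).infinite_compl.nonempty
  exact ⟨algebraMap F A t - a, spectrum.notMem_iff.mp ht,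
    by rw [Algebra.adjoin_singleton_algebraMap_sub, ha]⟩

theorem Pi.algebra_adjoin_singleton_eq_top_of_isCoprime {R ι : Type*} [CommRing R] [Finite ι]
    {A : ι → Type*} [∀ i, Ring (A i)] [∀ i, Algebra R (A i)] {x : ∀ i, A i} (p : ι → R[X])
    (hpx : ∀ i, aeval (x i) (p i) = 0) (hp : Pairwise fun i j => IsCoprime (p i) (p j))
    (hx : ∀ i, Algebra.adjoin R {x i} = ⊤) :
    Algebra.adjoin R {x} = ⊤ := by
  refine Algebra.eq_top_iff.mpr fun y => ?_
  choose q hq using fun i => (Algebra.adjoin_singleton_eq_range_aeval R (x i) ▸ hx i ▸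
    Algebra.mem_top (x := y i) : y i ∈ (aeval (x i)).range)
  obtain ⟨r, hr⟩ := Ideal.exists_forall_sub_mem_ideal (I := fun i => Ideal.span {p i})
    (fun i j hij => (Ideal.isCoprime_span_singleton_iff _ _).mpr (hp hij)) q
  rw [Algebra.adjoin_singleton_eq_range_aeval]
  refine ⟨r, funext fun i => ?_⟩
  obtain ⟨s, hs⟩ := Ideal.mem_span_singleton'.mp (hr i)
  have : aeval (x i) r = aeval (x i) (q i) := by
    rw [← sub_eq_zero, ← map_sub, ← hs, map_mul, hpx, mul_zero]
  simpa [aeval_pi, this] using hq i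

theorem minpoly.isCoprime_of_ne {F K L : Type*} [Field F] [Ring K] [IsDomain K] [Algebra F K]
    [Ring L] [IsDomain L] [Algebra F L] {x : K} {y : L} (hx : IsIntegral F x)
    (hy : IsIntegral F y) (h : minpoly F x ≠ minpoly F y) :
    IsCoprime (minpoly F x) (minpoly F y) :=
  (minpoly.irreducible hx).coprime_iff_not_dvd.mpr fun hdvd => h <|
    eq_of_monic_of_associated (minpoly.monic hx) (minpoly.monic hy)
      ((minpoly.irreducible hx).associated_of_dvd (minpoly.irreducible hy) hdvd)

theorem finite_setOf_minpoly_algebraMap_sub_eq {F K : Type*} [Field F] [CommRing K] [IsDomain K]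
    [Algebra F K] {α : K} (hα : IsIntegral F α) (q : F[X]) :
    {c : F | minpoly F (algebraMap F K c - α) = q}.Finite := by
  by_cases hq : q = 0
  · convert Set.finite_empty
    refine Set.eq_empty_of_forall_notMem fun c hc => ?_
    exact minpoly.ne_zero (isIntegral_algebraMap.sub hα) (hc.trans hq)
  have hinj : Function.Injective fun c : F => algebraMap F K c - α :=
    sub_left_injective.comp (FaithfulSMul.algebraMap_injective F K)
  refine ((q.rootSet_finite K).preimage hinj.injOn).subset fun c hc => ?_
  rw [Set.mem_preimage, mem_rootSet]
  exact ⟨hq, hc ▸ minpoly.aeval F _⟩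

theorem exists_pairwise_ne_of_finite_fibers {ι : Type*} {F X : Type*} [Finite ι] [Infinite F]
    (f : ι → F → X) (hf : ∀ i y, {c | f i c = y}.Finite) :
    ∃ c : ι → F, Pairwise fun i j => f i (c i) ≠ f j (c j) := by
  induction ι using Finite.induction_empty_option with
  | of_equiv e ih =>
    obtain ⟨c, hc⟩ := ih (fun i => f (e i)) fun i => hf (e i)
    refine ⟨c ∘ e.symm, fun i j hij => ?_⟩
    simpa using hc (e.symm.injective.ne hij)
  | h_empty => exact ⟨isEmptyElim, isEmptyElim⟩
  | h_option ih =>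
    obtain ⟨c, hc⟩ := ih (fun i => f (some i)) fun i => hf (some i)
    have hbad : (⋃ j, {t | f none t = f (some j) (c j)}).Finite :=
      Set.finite_iUnion fun j => hf none _
    obtain ⟨t, ht⟩ := hbad.infinite_compl.nonempty
    simp only [Set.mem_compl_iff, Set.mem_iUnion, Set.mem_ofPred_eq, not_exists] at ht
    refine ⟨fun i => i.elim t c, ?_⟩
    rintro (_ | i) (_ | j) hij
    · exact absurd rfl hij
    · exact ht j
    · exact Ne.symm (ht i)
    · exact hc fun h => hij (congrArg some h)

theorem Field.exists_algebra_adjoin_singleton_eq_top (F K : Type*) [Field F] [Field K]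
    [Algebra F K] [FiniteDimensional F K] [Algebra.IsSeparable F K] :
    ∃ α : K, Algebra.adjoin F {α} = ⊤ := by
  obtain ⟨α, hα⟩ := Field.exists_primitive_element F K
  refine ⟨α, ?_⟩
  rw [← IntermediateField.adjoin_simple_toSubalgebra_of_isAlgebraic (IsAlgebraic.of_finite F α),
    hα, IntermediateField.top_toSubalgebra]

theorem Pi.exists_algebra_adjoin_singleton_eq_top (F : Type*) {ι : Type*} [Field F] [Infinite F]
    [Finite ι] (K : ι → Type*) [∀ i, Field (K i)] [∀ i, Algebra F (K i)]
    [∀ i, FiniteDimensional F (K i)] [∀ i, Algebra.IsSeparable F (K i)] :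
    ∃ x : ∀ i, K i, Algebra.adjoin F {x} = ⊤ := by
  choose α hα using fun i => Field.exists_algebra_adjoin_singleton_eq_top F (K i)
  have hα_int : ∀ i, IsIntegral F (α i) := fun i => .of_finite F _
  obtain ⟨c, hc⟩ := exists_pairwise_ne_of_finite_fibers
    (fun i c => minpoly F (algebraMap F (K i) c - α i))
    fun i => finite_setOf_minpoly_algebraMap_sub_eq (hα_int i)
  set x : ∀ i, K i := fun i => algebraMap F (K i) (c i) - α i
  have hx_int : ∀ i, IsIntegral F (x i) := fun i => isIntegral_algebraMap.sub (hα_int i)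
  refine ⟨x, Pi.algebra_adjoin_singleton_eq_top_of_isCoprime (fun i => minpoly F (x i))
    (fun i => minpoly.aeval F (x i))
    (fun i j hij => minpoly.isCoprime_of_ne (hx_int i) (hx_int j) (hc hij)) fun i => ?_⟩
  rw [Algebra.adjoin_singleton_algebraMap_sub, hα]

theorem Algebra.Etale.exists_adjoin_singleton_eq_top (F A : Type*) [Field F] [Infinite F]
    [CommRing A] [Algebra F A] [Algebra.Etale F A] :
    ∃ a : A, Algebra.adjoin F {a} = ⊤ := by
  obtain ⟨I, _, K, _, _, e, hK⟩ := (Algebra.Etale.iff_exists_algEquiv_prod F A).mp ‹_›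
  have := fun i => (hK i).1
  have := fun i => (hK i).2
  obtain ⟨x, hx⟩ := Pi.exists_algebra_adjoin_singleton_eq_top F K
  refine ⟨e.symm x, ?_⟩
  rw [← AlgEquiv.coe_toAlgHom, ← AlgHom.map_adjoin_singleton, hx, Algebra.map_top]
  exact (AlgHom.range_eq_top _).mpr e.symm.surjective

theorem etale_one_generator_general (F : Type) [Field F] [Infinite F]
    (A : Type) [CommRing A] [Algebra F A] [Algebra.Etale F A] :
    ∃ a : A, GeneratesAsNonUnitalAlgebra F ({a} : Set A) := by
  have : Module.Finite F A := Algebra.FormallyUnramified.finite_of_free F A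
  obtain ⟨a, ha⟩ := Algebra.Etale.exists_adjoin_singleton_eq_top F A
  obtain ⟨u, hu, hu_top⟩ := exists_isUnit_adjoin_singleton_eq_top ha
  exact ⟨u, .of_adjoin_eq_top (NonUnitalAlgebra.adjoin_singleton_eq_top_of_isUnit hu hu_top)⟩

/-- Every étale algebra of rank n over an infinite field F can be generated by one element as
a non-unital F-algebra. -/
theorem etale_one_generator (F : Type) [Field F] [Infinite F]
    (A : Type) [CommRing A] [Algebra F A] [Algebra.Etale F A]
    (n : ℕ) (hn : Module.finrank F A = n) :
    ∃ a : A, GeneratesAsNonUnitalAlgebra F ({a} : Set A) :=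
  etale_one_generator_general F A
end
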